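/- The limit z = lim_{n→∞} ln f(n) / ((3/2)(3^n+1)) exists, where f(n) is the number of acyclic orientations of SG_2(n), and for every positive integer m it satisfies (2/3^(m+1))·ln d(m) ≤ z ≤ (2/3^(m+1))·ln f(m). -/

import Mathlib

/-! Since `f(n+1) ≤ f(n)^3`, the sequence `ln f(n) / 3^n` is non-increasing; it is non-negative,
so it converges to its infimum `w`, which is at most each of its terms. Since `d(n)^3 ≤ d(n+1)`
and `d ≤ f`, we get `d(m)^(3^j) ≤ f(m+j)`, so `ln d(m) / 3^m` is a lower bound for all later
terms and hence for `w`. Finally `(3/2)(3^n + 1) ∼ 3^(n+1)/2`, so `z = (2/3) w`. -/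

/-- One step of the recursion of Lemma 1 of the paper for the numbers of classes
of acyclic orientations on the two-dimensional Sierpinski gasket `SG_2(n)`:
given the quadruple `(a, b, c, d)` at stage `n`, produce the quadruple at
stage `n+1`. -/
def sg2Step : ℕ × ℕ × ℕ × ℕ → ℕ × ℕ × ℕ × ℕ := fun (a, b, c, d) =>
  (5*a^3 + 8*a^2*b + 6*a^2*c + 3*a*b^2 + 4*a*b*c + a*c^2,
   12*a^3 + 35*a^2*b + 24*a^2*c + 30*a*b^2 + 34*a*b*c + 4*a*c^2 + 8*b^3 + 12*b^2*c + 3*b*c^2,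
   6*a^3 + 26*a^2*b + 39*a^2*c + 9*a^2*d + 30*a*b^2 + 76*a*b*c + 12*a*b*d + 40*a*c^2
     + 6*a*c*d + 10*b^3 + 33*b^2*c + 4*b^2*d + 30*b*c^2 + 4*b*c*d + 7*c^3 + c^2*d,
   24*a^3 + 126*a^2*b + 180*a^2*c + 54*a^2*d + 198*a*b^2 + 540*a*b*c + 144*a*b*d
     + 360*a*c^2 + 180*a*c*d + 18*a*d^2 + 92*b^3 + 354*b^2*c + 84*b^2*d + 438*b*c^2
     + 192*b*c*d + 18*b*d^2 + 172*c^3 + 102*c^2*d + 18*c*d^2 + d^3)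

/-- The quadruple `(a_2(n), b_2(n), c_2(n), d_2(n))` with initial values
`(1, 0, 0, 0)` at stage `0`. -/
def sg2Seq (n : ℕ) : ℕ × ℕ × ℕ × ℕ := sg2Step^[n] (1, 0, 0, 0)

def a2 (n : ℕ) : ℕ := (sg2Seq n).1
def b2 (n : ℕ) : ℕ := (sg2Seq n).2.1
def c2 (n : ℕ) : ℕ := (sg2Seq n).2.2.1
def d2 (n : ℕ) : ℕ := (sg2Seq n).2.2.2

/-- The number of acyclic orientations of `SG_2(n)`. -/
def f2 (n : ℕ) : ℕ := 6 * a2 n + 6 * b2 n + 6 * c2 n + d2 n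

open Filter Topology

lemma Real.log_natCast_monotone : Monotone fun n : ℕ => Real.log n := by
  intro a b hab
  rcases Nat.eq_zero_or_pos a with rfl | ha
  · simpa using Real.log_natCast_nonneg b
  · exact Real.log_le_log (by positivity) (by exact_mod_cast hab)

lemma Real.log_natCast_le_mul_log_of_le_pow {x y k : ℕ} (h : x ≤ y ^ k) :
    Real.log x ≤ k * Real.log y := by
  simpa [Real.log_pow] using Real.log_natCast_monotone h

lemma Real.mul_log_natCast_le_of_pow_le {x y k : ℕ} (h : x ^ k ≤ y) :
    k * Real.log x ≤ Real.log y := by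
  simpa [Real.log_pow] using Real.log_natCast_monotone h

noncomputable def logGrowth (k : ℕ) (u : ℕ → ℕ) : ℝ := ⨅ n, Real.log (u n) / (k : ℝ) ^ n

section LogGrowth

variable {k : ℕ} {u v : ℕ → ℕ}

lemma log_div_pow_nonneg (u : ℕ → ℕ) (k n : ℕ) : 0 ≤ Real.log (u n) / (k : ℝ) ^ n :=
  div_nonneg (Real.log_natCast_nonneg _) (by positivity)

lemma bddBelow_range_log_div_pow (u : ℕ → ℕ) (k : ℕ) :
    BddBelow (Set.range fun n => Real.log (u n) / (k : ℝ) ^ n) :=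
  ⟨0, Set.forall_mem_range.2 (log_div_pow_nonneg u k)⟩

lemma antitone_log_div_pow (hk : 0 < k) (hu : ∀ n, u (n + 1) ≤ u n ^ k) :
    Antitone fun n => Real.log (u n) / (k : ℝ) ^ n := by
  refine antitone_nat_of_succ_le fun n => ?_
  rw [pow_succ, mul_comm, ← div_div]
  gcongr
  rw [div_le_iff₀ (by positivity), mul_comm]
  exact Real.log_natCast_le_mul_log_of_le_pow (hu n)

lemma tendsto_logGrowth (hk : 0 < k) (hu : ∀ n, u (n + 1) ≤ u n ^ k) :
    Tendsto (fun n => Real.log (u n) / (k : ℝ) ^ n) atTop (𝓝 (logGrowth k u)) :=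
  tendsto_atTop_ciInf (antitone_log_div_pow hk hu) (bddBelow_range_log_div_pow u k)

lemma logGrowth_le (u : ℕ → ℕ) (k m : ℕ) : logGrowth k u ≤ Real.log (u m) / (k : ℝ) ^ m :=
  ciInf_le (bddBelow_range_log_div_pow u k) m

lemma pow_pow_le_of_pow_le_succ (hv : ∀ n, v n ^ k ≤ v (n + 1)) (m j : ℕ) :
    v m ^ k ^ j ≤ v (m + j) := by
  induction j with
  | zero => simp
  | succ j ih =>
    calc v m ^ k ^ (j + 1) = (v m ^ k ^ j) ^ k := by rw [pow_succ, pow_mul]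
      _ ≤ v (m + j) ^ k := Nat.pow_le_pow_left ih k
      _ ≤ v (m + (j + 1)) := hv _

lemma log_div_pow_le_logGrowth (hk : 0 < k) (hu : ∀ n, u (n + 1) ≤ u n ^ k)
    (hv : ∀ n, v n ^ k ≤ v (n + 1)) (hvu : ∀ n, v n ≤ u n) (m : ℕ) :
    Real.log (v m) / (k : ℝ) ^ m ≤ logGrowth k u := by
  refine le_ciInf fun j => ?_
  have hlog : (k : ℝ) ^ j * Real.log (v m) ≤ Real.log (u (m + j)) := by
    exact_mod_cast Real.mul_log_natCast_le_of_pow_le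
      ((pow_pow_le_of_pow_le_succ hv m j).trans (hvu _))
  calc Real.log (v m) / (k : ℝ) ^ m
      = (k : ℝ) ^ j * Real.log (v m) / (k : ℝ) ^ (m + j) := by
        rw [pow_add]; field_simp
    _ ≤ Real.log (u (m + j)) / (k : ℝ) ^ (m + j) := by gcongr
    _ ≤ Real.log (u j) / (k : ℝ) ^ j := antitone_log_div_pow hk hu (Nat.le_add_left j m)

end LogGrowth

lemma sg2Seq_succ (n : ℕ) : sg2Seq (n + 1) = sg2Step (sg2Seq n) :=
  Function.iterate_succ_apply' _ _ _

lemma f2_succ_le_pow_three (n : ℕ) : f2 (n + 1) ≤ f2 n ^ 3 := by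
  unfold f2 a2 b2 c2 d2
  rw [sg2Seq_succ]
  obtain ⟨a, b, c, d⟩ := sg2Seq n
  simp only [sg2Step]
  refine Nat.le.intro (k := 54*a^3 + 108*a^2*b + 54*a^2*c + 72*a*b^2 + 72*a*b*c + 18*a*c^2
    + 16*b^3 + 24*b^2*c + 12*b*c^2 + 2*c^3) ?_
  ring

lemma d2_pow_three_le_succ (n : ℕ) : d2 n ^ 3 ≤ d2 (n + 1) := by
  unfold d2
  rw [sg2Seq_succ]
  obtain ⟨a, b, c, d⟩ := sg2Seq n
  exact le_add_self

lemma d2_le_f2 (n : ℕ) : d2 n ≤ f2 n := le_add_self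

lemma tendsto_three_pow_div_three_halves_mul_pow_add_one :
    Tendsto (fun n : ℕ => (3 : ℝ) ^ n / ((3 / 2) * (3 ^ n + 1))) atTop (𝓝 (2 / 3)) := by
  have hinv : Tendsto (fun n : ℕ => ((3 : ℝ) ^ n)⁻¹) atTop (𝓝 0) :=
    tendsto_inv_atTop_zero.comp (tendsto_pow_atTop_atTop_of_one_lt (by norm_num))
  convert ((hinv.const_add 1).const_mul (3 / 2 : ℝ)).inv₀ (by norm_num) using 2 with n
  · field_simp
  · norm_num

/-- the limit `z = lim_n ln f(n) / ((3/2)(3^n + 1))` exists, and for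
every positive integer `m`,
`(2/3^(m+1))·ln d(m) ≤ z ≤ (2/3^(m+1))·ln f(m)`. -/
theorem sg2_growth_constant :
    ∃ z : ℝ, Filter.Tendsto
        (fun n : ℕ => Real.log (f2 n) / ((3 / 2) * (3 ^ n + 1))) Filter.atTop (nhds z) ∧
      ∀ m : ℕ, 1 ≤ m →
        (2 / 3 ^ (m + 1)) * Real.log (d2 m) ≤ z ∧ z ≤ (2 / 3 ^ (m + 1)) * Real.log (f2 m) := by
  have rescale (m : ℕ) (x : ℝ) : 2 / 3 ^ (m + 1) * x = 2 / 3 * (x / (3 : ℝ) ^ m) := by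
    rw [pow_succ]; field_simp
  have hk : 0 < 3 := by norm_num
  refine ⟨2 / 3 * logGrowth 3 f2, ?_, fun m _ => ⟨?_, ?_⟩⟩
  · convert ((tendsto_logGrowth hk f2_succ_le_pow_three).mul
      tendsto_three_pow_div_three_halves_mul_pow_add_one) using 2 with n
    · push_cast; field_simp
    · ring
  · rw [rescale]
    gcongr
    exact_mod_cast
      log_div_pow_le_logGrowth hk f2_succ_le_pow_three d2_pow_three_le_succ d2_le_f2 m
  · rw [rescale]
    gcongr
    exact_mod_cast logGrowth_le f2 3 m
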